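/- Let Q be a CSP instance and T a nice tree decomposition of its constraint graph. For every vector f satisfying the defining constraints of P(Q), define y_v^i = Σ_{K ∈ 𝒦(B) : K(v) = i} f(K) using any bag B containing v, and g(K) = Σ_{K' ∈ 𝒦(B) : K'↾_U = K} f(K') using any bag B with U ⊆ B, for each constraint C_U ∈ 𝒞 ∪ ℋ and K ∈ 𝒦(U). Then: (i) these values do not depend on the choice of the bag B; (ii) the resulting vector (y, g) satisfies the basic LP (1)–(3); and (iii) if f is integral then (y, g) is integral. In particular, (y, g) is the image of f under a linear map. -/

import Mathlib

/-! Common definitions: CSP instances, configurations, nice tree decompositions,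
and the polytopes from Kolman–Koutecký. -/

/-- A constraint with scope `scope`; its satisfaction depends only on the
coordinates in the scope (it is a relation on the domains of the scope). -/
structure CSPConstraint (n : ℕ) where
  scope : Finset (Fin n)
  sat : (Fin n → ℝ) → Prop
  sat_congr : ∀ z z' : Fin n → ℝ, (∀ v ∈ scope, z v = z' v) → sat z → sat z'

/-- A CSP instance: finite real domains, hard constraints and soft constraints. -/
structure CSPInstance (n : ℕ) where
  dom : Fin n → Finset ℝ
  hard : List (CSPConstraint n)
  soft : List (CSPConstraint n)

variable {n : ℕ}

/-- The list of all constraints (hard and soft). -/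
def consList (Q : CSPInstance n) : List (CSPConstraint n) := Q.hard ++ Q.soft

/-- A feasible assignment: values in the domains, satisfying all hard constraints. -/
def Feasible (Q : CSPInstance n) (z : Fin n → ℝ) : Prop :=
  (∀ v, z v ∈ Q.dom v) ∧ ∀ C ∈ Q.hard, C.sat z

-- Configurations of a set `W` of variables: partial assignments (with `none`
-- playing the role of the symbol `λ`) defined exactly on `W`.
open Classical in
noncomputable def configs (Q : CSPInstance n) (W : Finset (Fin n)) :
    Finset (Fin n → Option ℝ) :=
  (Fintype.piFinset fun v =>
      if v ∈ W then (Q.dom v).image some else ({none} : Finset (Option ℝ))).filter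
    (fun K => ∀ C ∈ Q.hard, C.scope ⊆ W → C.sat (fun v => (K v).getD 0))

/-- Restriction `K↾_W` of a configuration: coordinates outside `W` are set to `λ`. -/
def restrictCfg (K : Fin n → Option ℝ) (W : Finset (Fin n)) : Fin n → Option ℝ :=
  fun v => if v ∈ W then K v else none

/-- A (rooted) nice tree: leaves, introduce nodes, forget nodes and join nodes. -/
inductive NiceTree (n : ℕ) : Type
  | leaf (v : Fin n) : NiceTree n
  | introduce (v : Fin n) (t : NiceTree n) : NiceTree n
  | forget (v : Fin n) (t : NiceTree n) : NiceTree n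
  | join (t₁ t₂ : NiceTree n) : NiceTree n

namespace NiceTree

/-- The bag of the root node of a nice tree. -/
def bag : NiceTree n → Finset (Fin n)
  | leaf v => {v}
  | introduce v t => insert v (bag t)
  | forget v t => (bag t).erase v
  | join t₁ _ => bag t₁

/-- All vertices appearing in bags of the tree. -/
def verts : NiceTree n → Finset (Fin n)
  | leaf v => {v}
  | introduce v t => insert v (verts t)
  | forget _ t => verts t
  | join t₁ t₂ => verts t₁ ∪ verts t₂

/-- Number of nodes of the tree. -/
def size : NiceTree n → ℕ
  | leaf _ => 1
  | introduce _ t => size t + 1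
  | forget _ t => size t + 1
  | join t₁ t₂ => size t₁ + size t₂ + 1

/-- Structural validity of a nice tree (in particular, the connectivity
condition of tree decompositions: an introduced vertex does not occur below,
and vertices shared by the two subtrees of a join lie in its bag). -/
def valid : NiceTree n → Prop
  | leaf _ => True
  | introduce v t => v ∉ verts t ∧ valid t
  | forget v t => v ∈ bag t ∧ valid t
  | join t₁ t₂ => bag t₁ = bag t₂ ∧ verts t₁ ∩ verts t₂ ⊆ bag t₁ ∧ valid t₁ ∧ valid t₂

/-- `isSubtree s t`: `s` is a node (subtree) of `t`. -/
def isSubtree (s : NiceTree n) : NiceTree n → Prop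
  | leaf v => s = leaf v
  | introduce v t => s = introduce v t ∨ isSubtree s t
  | forget v t => s = forget v t ∨ isSubtree s t
  | join t₁ t₂ => s = join t₁ t₂ ∨ isSubtree s t₁ ∨ isSubtree s t₂

-- The configurations relevant to the subtree: `ℛ(a) = ⋃_{b ∈ T(a)} 𝒦(B(b))`.
open Classical in
noncomputable def relConfigs (Q : CSPInstance n) : NiceTree n → Finset (Fin n → Option ℝ)
  | leaf v => configs Q {v}
  | introduce v t => configs Q (insert v (bag t)) ∪ relConfigs Q t
  | forget v t => configs Q ((bag t).erase v) ∪ relConfigs Q t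
  | join t₁ t₂ => relConfigs Q t₁ ∪ relConfigs Q t₂

end NiceTree

/-- A valid nice tree decomposition for the CSP instance `Q`: every variable is
in some bag and every constraint scope is contained in some bag. -/
def IsNiceTreeDecompCSP (Q : CSPInstance n) (T : NiceTree n) : Prop :=
  T.valid ∧ (∀ v : Fin n, v ∈ T.verts) ∧
    ∀ C ∈ consList Q, ∃ s : NiceTree n, s.isSubtree T ∧ C.scope ⊆ s.bag

/-- A valid nice tree decomposition of a graph `G`: every vertex is in some bag
and both endpoints of every edge lie in a common bag. -/
def IsNiceTreeDecompGraph (G : SimpleGraph (Fin n)) (T : NiceTree n) : Prop :=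
  T.valid ∧ (∀ v : Fin n, v ∈ T.verts) ∧
    ∀ u v : Fin n, G.Adj u v → ∃ s : NiceTree n, s.isSubtree T ∧ u ∈ s.bag ∧ v ∈ s.bag

/-- The constraint graph of a CSP instance. -/
def constraintGraph (Q : CSPInstance n) : SimpleGraph (Fin n) where
  Adj u v := u ≠ v ∧ ∃ C ∈ consList Q, u ∈ C.scope ∧ v ∈ C.scope
  symm := by
    constructor
    rintro u v ⟨hne, C, hC, hu, hv⟩
    exact ⟨hne.symm, C, hC, hv, hu⟩
  loopless := by
    constructor
    rintro v ⟨hne, -⟩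
    exact hne rfl

-- The LP constraints of `P(Q)` relevant to the subtree `t`: bag equations and
-- consistency equations at introduce and forget nodes of `t`.
def RelCons (Q : CSPInstance n) (f : (Fin n → Option ℝ) → ℝ) : NiceTree n → Prop
  | .leaf v => ∑ K ∈ configs Q {v}, f K = 1
  | .introduce v t =>
      RelCons Q f t ∧ (∑ K ∈ configs Q (insert v t.bag), f K = 1) ∧
      ∀ K ∈ configs Q t.bag,
        ∑ K' ∈ (configs Q (insert v t.bag)).filter
            (fun K' => restrictCfg K' t.bag = K), f K' = f K
  | .forget v t =>
      RelCons Q f t ∧ (∑ K ∈ configs Q (t.bag.erase v), f K = 1) ∧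
      ∀ K ∈ configs Q (t.bag.erase v),
        ∑ K' ∈ (configs Q t.bag).filter
            (fun K' => restrictCfg K' (t.bag.erase v) = K), f K' = f K
  | .join t₁ t₂ => RelCons Q f t₁ ∧ RelCons Q f t₂

/-- All the constraints of `P(Q)` relevant to the subtree `t`, including the
bounds `0 ≤ f(K) ≤ 1` for relevant configurations. -/
def RelevantLP (Q : CSPInstance n) (t : NiceTree n) (f : (Fin n → Option ℝ) → ℝ) : Prop :=
  RelCons Q f t ∧ ∀ K ∈ t.relConfigs Q, 0 ≤ f K ∧ f K ≤ 1

/-- The polytope `P(Q) ⊆ ℝ^{𝒦_ℬ}` (coordinates outside `𝒦_ℬ` are zero). -/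
def Ppoly (Q : CSPInstance n) (T : NiceTree n) : Set ((Fin n → Option ℝ) → ℝ) :=
  {f | RelevantLP Q T f ∧ ∀ K, K ∉ T.relConfigs Q → f K = 0}

/-- Extended feasible assignments `(z, h)`. -/
def ExtAssignments (Q : CSPInstance n) :
    Set ((Fin n → ℝ) × (Fin Q.soft.length → ℝ)) :=
  {p | Feasible Q p.1 ∧ ∀ i : Fin Q.soft.length,
      ((Q.soft.get i).sat p.1 ∧ p.2 i = 1) ∨ (¬ (Q.soft.get i).sat p.1 ∧ p.2 i = 0)}

/-- `CSP(Q)`: the convex hull of all extended feasible assignments. -/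
def CSPpolytope (Q : CSPInstance n) : Set ((Fin n → ℝ) × (Fin Q.soft.length → ℝ)) :=
  convexHull ℝ (ExtAssignments Q)

/-- `CSP'(Q)`: the convex hull of all feasible assignments. -/
def CSPpolytope' (Q : CSPInstance n) : Set (Fin n → ℝ) :=
  convexHull ℝ {z | Feasible Q z}

/-- The `y`-variables of the basic LP: one for each `v ∈ V` and `i ∈ D_v`. -/
abbrev YType (Q : CSPInstance n) := (v : Fin n) → {i : ℝ // i ∈ Q.dom v} → ℝ

/-- The `g`-variables of the basic LP: one for each constraint `C_U ∈ 𝒞 ∪ ℋ`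
and each configuration `K ∈ 𝒦(U)`. -/
abbrev GType (Q : CSPInstance n) :=
  (c : Fin (consList Q).length) →
    {K : Fin n → Option ℝ // K ∈ configs Q ((consList Q).get c).scope} → ℝ

/-- The basic LP (1)–(3). -/
def BasicLP (Q : CSPInstance n) (p : YType Q × GType Q) : Prop :=
  (∀ v : Fin n, ∑ i ∈ (Q.dom v).attach, p.1 v i = 1) ∧
  (∀ c : Fin (consList Q).length, ∀ v ∈ ((consList Q).get c).scope,
    ∀ (i : ℝ) (hi : i ∈ Q.dom v),
      ∑ K ∈ (configs Q ((consList Q).get c).scope).attach.filter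
          (fun K => K.1 v = some i), p.2 c K = p.1 v ⟨i, hi⟩) ∧
  (∀ v i, 0 ≤ p.1 v i ∧ p.1 v i ≤ 1) ∧ (∀ c K, 0 ≤ p.2 c K ∧ p.2 c K ≤ 1)

/-- Integrality (all coordinates in `{0,1}`) of a `(y, g)` vector. -/
def IntegralYG (Q : CSPInstance n) (p : YType Q × GType Q) : Prop :=
  (∀ v i, p.1 v i = 0 ∨ p.1 v i = 1) ∧ ∀ c K, p.2 c K = 0 ∨ p.2 c K = 1

-- The map sending a (feasible) assignment `z` to the `(y, g)` vector of the basic LP.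
open Classical in
noncomputable def exMap (Q : CSPInstance n) (z : Fin n → ℝ) : YType Q × GType Q :=
  (fun v i => if z v = i.1 then 1 else 0,
   fun c K => if ∀ u ∈ ((consList Q).get c).scope, K.1 u = some (z u) then 1 else 0)

/-! The consistency equations at an introduce or forget node say that `f` on the larger bag
marginalizes to `f` on the smaller one. Hence the marginal of `f` on a set `U` of variables is
the same at a node and at its child whenever both bags contain `U`. The bags containing `U`
span a connected part of the tree (this is what validity of join nodes guarantees), so any two
of them lie below a common one, and all these marginals agree. The basic LP equations are then
marginalization identities inside a single bag, on which `f` is a probability distribution;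
this also gives the bounds and integrality. -/

open Finset

lemma Finset.sum_eq_zero_or_one_of_le_one {α R : Type*} [Semiring R] [PartialOrder R]
    [IsOrderedRing R] {s : Finset α} {g : α → R} (h01 : ∀ x ∈ s, g x = 0 ∨ g x = 1)
    (hle : ∑ x ∈ s, g x ≤ 1) : ∑ x ∈ s, g x = 0 ∨ ∑ x ∈ s, g x = 1 := by
  have hnonneg : ∀ y ∈ s, 0 ≤ g y := fun y hy => by
    rcases h01 y hy with h | h <;> simp [h]
  by_cases hone : ∃ x ∈ s, g x = 1
  · obtain ⟨x, hx, hgx⟩ := hone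
    exact Or.inr (hle.antisymm (hgx ▸ single_le_sum hnonneg hx))
  · exact Or.inl (sum_eq_zero fun x hx => (h01 x hx).resolve_right fun h => hone ⟨x, hx, h⟩)

section Configurations

variable {Q : CSPInstance n} {W W' : Finset (Fin n)} {K : Fin n → Option ℝ} {v : Fin n}

lemma restrictCfg_apply_of_mem (hv : v ∈ W) (K : Fin n → Option ℝ) :
    restrictCfg K W v = K v := if_pos hv

lemma restrictCfg_restrictCfg (h : W ⊆ W') (K : Fin n → Option ℝ) :
    restrictCfg (restrictCfg K W') W = restrictCfg K W := by
  funext v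
  by_cases hv : v ∈ W
  · simp [restrictCfg, hv, h hv]
  · simp [restrictCfg, hv]

lemma mem_configs_iff :
    K ∈ configs Q W ↔ (∀ v ∈ W, K v ∈ (Q.dom v).image some) ∧ (∀ v ∉ W, K v = none) ∧
      ∀ C ∈ Q.hard, C.scope ⊆ W → C.sat (fun v => (K v).getD 0) := by
  simp only [configs, mem_filter, Fintype.mem_piFinset]
  constructor
  · rintro ⟨hK, hC⟩
    refine ⟨fun v hv => by simpa [hv] using hK v, fun v hv => by simpa [hv] using hK v, hC⟩
  · rintro ⟨hin, hout, hC⟩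
    refine ⟨fun v => ?_, hC⟩
    by_cases hv : v ∈ W
    · simpa [hv] using hin v hv
    · simp [hv, hout v hv]

lemma restrictCfg_mem_configs (h : W ⊆ W') (hK : K ∈ configs Q W') :
    restrictCfg K W ∈ configs Q W := by
  obtain ⟨hin, -, hC⟩ := mem_configs_iff.mp hK
  refine mem_configs_iff.mpr ⟨fun v hv => ?_, fun v hv => if_neg hv, fun C hCh hsub => ?_⟩
  · rw [restrictCfg_apply_of_mem hv]
    exact hin v (h hv)
  · refine C.sat_congr _ _ (fun v hv => ?_) (hC C hCh (hsub.trans h))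
    rw [restrictCfg_apply_of_mem (hsub hv)]

end Configurations

namespace NiceTree

variable {s s' t : NiceTree n}

lemma isSubtree_refl : ∀ t : NiceTree n, t.isSubtree t
  | leaf _ | introduce _ _ | forget _ _ | join _ _ => by simp [isSubtree]

lemma bag_subset_verts : ∀ t : NiceTree n, t.bag ⊆ t.verts
  | leaf _ => Subset.refl _
  | introduce v t => insert_subset_insert v (bag_subset_verts t)
  | forget v t => (erase_subset v t.bag).trans (bag_subset_verts t)
  | join t₁ _ => (bag_subset_verts t₁).trans subset_union_left

lemma verts_subset_of_isSubtree (h : s.isSubtree t) : s.verts ⊆ t.verts := by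
  induction t with
  | leaf v => subst h; rfl
  | introduce v t ih =>
    rcases h with rfl | h
    exacts [Subset.rfl, (ih h).trans (subset_insert _ _)]
  | forget v t ih =>
    rcases h with rfl | h
    exacts [Subset.rfl, ih h]
  | join t₁ t₂ ih₁ ih₂ =>
    rcases h with rfl | h | h
    exacts [Subset.rfl, (ih₁ h).trans subset_union_left, (ih₂ h).trans subset_union_right]

lemma valid_of_isSubtree (h : s.isSubtree t) (ht : t.valid) : s.valid := by
  induction t with
  | leaf v => subst h; trivial
  | introduce v t ih | forget v t ih =>
    rcases h with rfl | h
    exacts [ht, ih h ht.2]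
  | join t₁ t₂ ih₁ ih₂ =>
    rcases h with rfl | h | h
    exacts [ht, ih₁ h ht.2.2.1, ih₂ h ht.2.2.2]

lemma exists_isSubtree_mem_bag {v : Fin n} (h : v ∈ t.verts) :
    ∃ s : NiceTree n, s.isSubtree t ∧ v ∈ s.bag := by
  induction t with
  | leaf w => exact ⟨leaf w, rfl, h⟩
  | introduce w t ih =>
    rcases mem_insert.mp h with rfl | h
    · exact ⟨introduce v t, Or.inl rfl, mem_insert_self _ _⟩
    · obtain ⟨s, hs, hv⟩ := ih h
      exact ⟨s, Or.inr hs, hv⟩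
  | forget w t ih =>
    obtain ⟨s, hs, hv⟩ := ih h
    exact ⟨s, Or.inr hs, hv⟩
  | join t₁ t₂ ih₁ ih₂ =>
    rcases mem_union.mp h with h | h
    · obtain ⟨s, hs, hv⟩ := ih₁ h
      exact ⟨s, Or.inr (Or.inl hs), hv⟩
    · obtain ⟨s, hs, hv⟩ := ih₂ h
      exact ⟨s, Or.inr (Or.inr hs), hv⟩

lemma exists_common_ancestor {U : Finset (Fin n)} (ht : t.valid) (hs : s.isSubtree t)
    (hs' : s'.isSubtree t) (hUs : U ⊆ s.bag) (hUs' : U ⊆ s'.bag) :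
    ∃ r : NiceTree n, r.isSubtree t ∧ s.isSubtree r ∧ s'.isSubtree r ∧ U ⊆ r.bag := by
  induction t with
  | leaf v => subst hs hs'; exact ⟨leaf v, rfl, rfl, rfl, hUs⟩
  | introduce w t ih | forget w t ih =>
    rcases hs with rfl | hs
    · exact ⟨_, isSubtree_refl _, isSubtree_refl _, hs', hUs⟩
    rcases hs' with rfl | hs'
    · exact ⟨_, isSubtree_refl _, Or.inr hs, isSubtree_refl _, hUs'⟩
    obtain ⟨r, hr, hsr, hs'r, hUr⟩ := ih ht.2 hs hs'
    exact ⟨r, Or.inr hr, hsr, hs'r, hUr⟩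
  | join t₁ t₂ ih₁ ih₂ =>
    obtain ⟨hbag, hshared, hv₁, hv₂⟩ := ht
    have hroot : s.isSubtree (join t₁ t₂) → s'.isSubtree (join t₁ t₂) → U ⊆ t₁.bag →
        ∃ r : NiceTree n, r.isSubtree (join t₁ t₂) ∧ s.isSubtree r ∧ s'.isSubtree r ∧
          U ⊆ r.bag :=
      fun h h' hU => ⟨_, isSubtree_refl _, h, h', hU⟩
    have hcross : ∀ {u u' : NiceTree n}, u.isSubtree t₁ → u'.isSubtree t₂ → U ⊆ u.bag →
        U ⊆ u'.bag → U ⊆ t₁.bag := fun hu hu' hUu hUu' x hx =>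
      hshared <| mem_inter.mpr
        ⟨verts_subset_of_isSubtree hu (bag_subset_verts _ (hUu hx)),
          verts_subset_of_isSubtree hu' (bag_subset_verts _ (hUu' hx))⟩
    rcases hs with rfl | hs | hs
    · exact hroot (isSubtree_refl _) hs' hUs
    all_goals rcases hs' with rfl | hs' | hs'
    · exact hroot (Or.inr (Or.inl hs)) (isSubtree_refl _) hUs'
    · obtain ⟨r, hr, hsr, hs'r, hUr⟩ := ih₁ hv₁ hs hs'
      exact ⟨r, Or.inr (Or.inl hr), hsr, hs'r, hUr⟩
    · exact hroot (Or.inr (Or.inl hs)) (Or.inr (Or.inr hs')) (hcross hs hs' hUs hUs')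
    · exact hroot (Or.inr (Or.inr hs)) (isSubtree_refl _) hUs'
    · exact hroot (Or.inr (Or.inr hs)) (Or.inr (Or.inl hs')) (hcross hs' hs hUs' hUs)
    · obtain ⟨r, hr, hsr, hs'r, hUr⟩ := ih₂ hv₂ hs hs'
      exact ⟨r, Or.inr (Or.inr hr), hsr, hs'r, hUr⟩

lemma configs_bag_subset_relConfigs {Q : CSPInstance n} (h : s.isSubtree t) :
    configs Q s.bag ⊆ t.relConfigs Q := by
  induction t generalizing s with
  | leaf v => subst h; rfl
  | introduce v t ih | forget v t ih =>
    rcases h with rfl | h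
    exacts [subset_union_left, (ih h).trans subset_union_right]
  | join t₁ t₂ ih₁ ih₂ =>
    rcases h with rfl | h | h
    · exact (ih₁ (isSubtree_refl t₁)).trans subset_union_left
    · exact (ih₁ h).trans subset_union_left
    · exact (ih₂ h).trans subset_union_right

end NiceTree

section Marginals

variable {Q : CSPInstance n} {W W' : Finset (Fin n)}
  {P : (Fin n → Option ℝ) → Prop} [DecidablePred P]

lemma sum_filter_configs_eq_sum_fiberwise {M : Type*} [AddCommMonoid M]
    (f : (Fin n → Option ℝ) → M) (hW : W ⊆ W') (hP : ∀ K, P (restrictCfg K W) ↔ P K) :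
    ∑ K ∈ (configs Q W').filter P, f K
      = ∑ K₀ ∈ (configs Q W).filter P,
          ∑ K ∈ (configs Q W').filter (fun K => restrictCfg K W = K₀), f K := by
  have hmaps : ∀ K ∈ (configs Q W').filter P, restrictCfg K W ∈ (configs Q W).filter P :=
    fun K hK => mem_filter.mpr
      ⟨restrictCfg_mem_configs hW (mem_filter.mp hK).1, (hP K).mpr (mem_filter.mp hK).2⟩
  rw [← sum_fiberwise_of_maps_to hmaps]
  refine sum_congr rfl fun K₀ hK₀ => sum_congr ?_ fun _ _ => rfl
  ext K
  simp only [mem_filter, and_congr_left_iff, and_iff_left_iff_imp]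
  rintro rfl -
  exact (hP K).mp (mem_filter.mp hK₀).2

lemma sum_filter_configs_eq_of_consistent {f : (Fin n → Option ℝ) → ℝ} (hW : W ⊆ W')
    (hP : ∀ K, P (restrictCfg K W) ↔ P K)
    (hcons : ∀ K₀ ∈ configs Q W,
      ∑ K ∈ (configs Q W').filter (fun K => restrictCfg K W = K₀), f K = f K₀) :
    ∑ K ∈ (configs Q W').filter P, f K = ∑ K ∈ (configs Q W).filter P, f K := by
  rw [sum_filter_configs_eq_sum_fiberwise f hW hP]
  exact sum_congr rfl fun K₀ hK₀ => hcons K₀ (mem_filter.mp hK₀).1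

lemma sum_dom_sum_filter_configs_eq {M : Type*} [AddCommMonoid M]
    (f : (Fin n → Option ℝ) → M) {v : Fin n} (hv : v ∈ W) :
    ∑ i ∈ (Q.dom v).attach, ∑ K ∈ (configs Q W).filter (fun K => K v = some i.1), f K
      = ∑ K ∈ configs Q W, f K := by
  have hmaps : ∀ K ∈ configs Q W, K v ∈ (Q.dom v).image some :=
    fun K hK => (mem_configs_iff.mp hK).1 v hv
  rw [← sum_fiberwise_of_maps_to hmaps, sum_image fun x _ y _ h => Option.some_injective ℝ h]
  exact sum_attach (Q.dom v) fun i => ∑ K ∈ (configs Q W).filter (fun K => K v = some i), f K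

end Marginals

namespace RelCons

open NiceTree

variable {Q : CSPInstance n} {f : (Fin n → Option ℝ) → ℝ} {s s' t : NiceTree n}

lemma of_isSubtree (h : s.isSubtree t) (hf : RelCons Q f t) : RelCons Q f s := by
  induction t with
  | leaf v => subst h; exact hf
  | introduce v t ih | forget v t ih =>
    rcases h with rfl | h
    exacts [hf, ih h hf.1]
  | join t₁ t₂ ih₁ ih₂ =>
    rcases h with rfl | h | h
    exacts [hf, ih₁ h hf.1, ih₂ h hf.2]

lemma sum_configs_bag : ∀ {t : NiceTree n}, RelCons Q f t → ∑ K ∈ configs Q t.bag, f K = 1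
  | leaf _, hf => hf
  | introduce _ _, hf | forget _ _, hf => hf.2.1
  | join t₁ _, hf => sum_configs_bag (t := t₁) hf.1

variable {U : Finset (Fin n)} {P : (Fin n → Option ℝ) → Prop} [DecidablePred P]

lemma sum_filter_configs_eq_of_isSubtree (hP : ∀ K, P (restrictCfg K U) ↔ P K)
    (ht : t.valid) (hf : RelCons Q f t) (hs : s.isSubtree t) (hUs : U ⊆ s.bag)
    (hUt : U ⊆ t.bag) :
    ∑ K ∈ (configs Q s.bag).filter P, f K = ∑ K ∈ (configs Q t.bag).filter P, f K := by
  have hPW : ∀ {W}, U ⊆ W → ∀ K, P (restrictCfg K W) ↔ P K := fun hUW K => by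
    rw [← hP, restrictCfg_restrictCfg hUW, hP]
  induction t generalizing s with
  | leaf v => subst hs; rfl
  | introduce w t ih =>
    rcases hs with rfl | hs
    · rfl
    have hUt' : U ⊆ t.bag := fun x hx =>
      (mem_insert.mp (hUt hx)).resolve_left fun hxw => ht.1 <|
        hxw ▸ verts_subset_of_isSubtree hs (bag_subset_verts s (hUs hx))
    rw [ih ht.2 hf.1 hs hUs hUt']
    exact (sum_filter_configs_eq_of_consistent (subset_insert w t.bag) (hPW hUt') hf.2.2).symm
  | forget w t ih =>
    rcases hs with rfl | hs
    · rfl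
    rw [ih ht.2 hf.1 hs hUs (hUt.trans (erase_subset w t.bag))]
    exact sum_filter_configs_eq_of_consistent (erase_subset w t.bag) (hPW hUt) hf.2.2
  | join t₁ t₂ ih₁ ih₂ =>
    rcases hs with rfl | hs | hs
    · rfl
    · exact ih₁ ht.2.2.1 hf.1 hs hUs hUt
    · rw [ih₂ ht.2.2.2 hf.2 hs hUs (ht.1 ▸ hUt), ← ht.1]
      rfl

lemma sum_filter_configs_eq (hP : ∀ K, P (restrictCfg K U) ↔ P K) (ht : t.valid)
    (hf : RelCons Q f t) (hs : s.isSubtree t) (hs' : s'.isSubtree t) (hUs : U ⊆ s.bag)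
    (hUs' : U ⊆ s'.bag) :
    ∑ K ∈ (configs Q s.bag).filter P, f K = ∑ K ∈ (configs Q s'.bag).filter P, f K := by
  obtain ⟨r, hr, hsr, hs'r, hUr⟩ := exists_common_ancestor ht hs hs' hUs hUs'
  have hrv := valid_of_isSubtree hr ht
  have hrf := hf.of_isSubtree hr
  rw [sum_filter_configs_eq_of_isSubtree hP hrv hrf hsr hUs hUr,
    sum_filter_configs_eq_of_isSubtree hP hrv hrf hs'r hUs' hUr]

end RelCons

namespace Ppoly

variable {Q : CSPInstance n} {T s : NiceTree n} {f : (Fin n → Option ℝ) → ℝ}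
  (P : (Fin n → Option ℝ) → Prop) [DecidablePred P]

lemma sum_filter_configs_mem_Icc (hf : f ∈ Ppoly Q T) (hs : s.isSubtree T) :
    ∑ K ∈ (configs Q s.bag).filter P, f K ∈ Set.Icc 0 1 := by
  have hnonneg : ∀ K ∈ configs Q s.bag, 0 ≤ f K :=
    fun K hK => (hf.1.2 K (NiceTree.configs_bag_subset_relConfigs hs hK)).1
  refine ⟨sum_nonneg fun K hK => hnonneg K (mem_filter.mp hK).1, ?_⟩
  calc ∑ K ∈ (configs Q s.bag).filter P, f K
      ≤ ∑ K ∈ configs Q s.bag, f K :=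
        sum_le_sum_of_subset_of_nonneg (filter_subset _ _) fun K hK _ => hnonneg K hK
    _ = 1 := (hf.1.1.of_isSubtree hs).sum_configs_bag

lemma sum_filter_configs_eq_zero_or_one (hf : f ∈ Ppoly Q T) (hs : s.isSubtree T)
    (hint : ∀ K, f K = 0 ∨ f K = 1) :
    ∑ K ∈ (configs Q s.bag).filter P, f K = 0 ∨ ∑ K ∈ (configs Q s.bag).filter P, f K = 1 :=
  sum_eq_zero_or_one_of_le_one (fun K _ => hint K) (sum_filter_configs_mem_Icc P hf hs).2

end Ppoly

def HasBagMarginals (Q : CSPInstance n) (T : NiceTree n) (f : (Fin n → Option ℝ) → ℝ)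
    (p : YType Q × GType Q) : Prop :=
  (∀ (v : Fin n) (i : {i : ℝ // i ∈ Q.dom v}) (s : NiceTree n),
    s.isSubtree T → v ∈ s.bag →
    p.1 v i = ∑ K ∈ (configs Q s.bag).filter (fun K => K v = some i.1), f K) ∧
  ∀ (c : Fin (consList Q).length)
    (K₀ : {K : Fin n → Option ℝ // K ∈ configs Q ((consList Q).get c).scope})
    (s : NiceTree n), s.isSubtree T → ((consList Q).get c).scope ⊆ s.bag →
    p.2 c K₀ = ∑ K ∈ (configs Q s.bag).filter
      (fun K => restrictCfg K ((consList Q).get c).scope = K₀.1), f K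

section BagMarginals

variable {Q : CSPInstance n} {T : NiceTree n} {f : (Fin n → Option ℝ) → ℝ}
  {p : YType Q × GType Q}

lemma IsNiceTreeDecompCSP.exists_mem_bag (hT : IsNiceTreeDecompCSP Q T) (v : Fin n) :
    ∃ s : NiceTree n, s.isSubtree T ∧ v ∈ s.bag :=
  NiceTree.exists_isSubtree_mem_bag (hT.2.1 v)

lemma IsNiceTreeDecompCSP.exists_scope_subset_bag (hT : IsNiceTreeDecompCSP Q T)
    (c : Fin (consList Q).length) :
    ∃ s : NiceTree n, s.isSubtree T ∧ ((consList Q).get c).scope ⊆ s.bag :=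
  hT.2.2 _ (List.get_mem _ c)

lemma HasBagMarginals.basicLP (hT : IsNiceTreeDecompCSP Q T) (hf : f ∈ Ppoly Q T)
    (hp : HasBagMarginals Q T f p) : BasicLP Q p := by
  obtain ⟨hy, hg⟩ := hp
  refine ⟨fun v => ?_, fun c v hv i hi => ?_, fun v i => ?_, fun c K₀ => ?_⟩
  · obtain ⟨s, hs, hvs⟩ := hT.exists_mem_bag v
    rw [sum_congr rfl fun i _ => hy v i s hs hvs, sum_dom_sum_filter_configs_eq f hvs]
    exact (hf.1.1.of_isSubtree hs).sum_configs_bag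
  · obtain ⟨s, hs, hUs⟩ := hT.exists_scope_subset_bag c
    set U := ((consList Q).get c).scope
    calc ∑ K₀ ∈ (configs Q U).attach.filter (fun K => K.1 v = some i), p.2 c K₀
        = ∑ K₀ ∈ (configs Q U).attach.filter (fun K => K.1 v = some i),
            ∑ K ∈ (configs Q s.bag).filter (fun K => restrictCfg K U = K₀.1), f K :=
          sum_congr rfl fun K₀ _ => hg c K₀ s hs hUs
      _ = ∑ K₀ ∈ (configs Q U).filter (fun K => K v = some i),
            ∑ K ∈ (configs Q s.bag).filter (fun K => restrictCfg K U = K₀), f K := by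
          rw [sum_filter, sum_filter]
          exact sum_attach (configs Q U) fun K₀ => if K₀ v = some i then
            ∑ K ∈ (configs Q s.bag).filter (fun K => restrictCfg K U = K₀), f K else 0
      _ = ∑ K ∈ (configs Q s.bag).filter (fun K => K v = some i), f K :=
          (sum_filter_configs_eq_sum_fiberwise f hUs fun K => by
            rw [restrictCfg_apply_of_mem hv]).symm
      _ = p.1 v ⟨i, hi⟩ := (hy v ⟨i, hi⟩ s hs (hUs hv)).symm
  · obtain ⟨s, hs, hvs⟩ := hT.exists_mem_bag v
    rw [hy v i s hs hvs]
    exact Ppoly.sum_filter_configs_mem_Icc _ hf hs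
  · obtain ⟨s, hs, hUs⟩ := hT.exists_scope_subset_bag c
    rw [hg c K₀ s hs hUs]
    exact Ppoly.sum_filter_configs_mem_Icc _ hf hs

lemma HasBagMarginals.integralYG (hT : IsNiceTreeDecompCSP Q T) (hf : f ∈ Ppoly Q T)
    (hint : ∀ K, f K = 0 ∨ f K = 1) (hp : HasBagMarginals Q T f p) : IntegralYG Q p := by
  obtain ⟨hy, hg⟩ := hp
  refine ⟨fun v i => ?_, fun c K₀ => ?_⟩
  · obtain ⟨s, hs, hvs⟩ := hT.exists_mem_bag v
    rw [hy v i s hs hvs]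
    exact Ppoly.sum_filter_configs_eq_zero_or_one _ hf hs hint
  · obtain ⟨s, hs, hUs⟩ := hT.exists_scope_subset_bag c
    rw [hg c K₀ s hs hUs]
    exact Ppoly.sum_filter_configs_eq_zero_or_one _ hf hs hint

end BagMarginals

noncomputable def bagMarginalMap (Q : CSPInstance n) (Bv : Fin n → Finset (Fin n))
    (Bc : Fin (consList Q).length → Finset (Fin n)) :
    ((Fin n → Option ℝ) → ℝ) →ₗ[ℝ] YType Q × GType Q where
  toFun f :=
    (fun v i => ∑ K ∈ (configs Q (Bv v)).filter (fun K => K v = some i.1), f K,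
     fun c K₀ => ∑ K ∈ (configs Q (Bc c)).filter
       (fun K => restrictCfg K ((consList Q).get c).scope = K₀.1), f K)
  map_add' f g := by
    ext <;> simp [sum_add_distrib]
  map_smul' a f := by
    ext <;> simp [mul_sum]

/-- The projection from `P(Q)` to the basic LP: the values
`y_v^i` and `g(K)` obtained by summing `f` over configurations of a bag are
independent of the chosen bag, satisfy the basic LP, are integral whenever `f`
is, and are the image of `f` under a linear map. -/
theorem ppoly_projects_to_basicLP (n : ℕ) (Q : CSPInstance n) (T : NiceTree n)
    (hT : IsNiceTreeDecompCSP Q T) :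
    (∀ f ∈ Ppoly Q T,
      -- (i) independence of the chosen bag, for the `y`-values
      (∀ (v : Fin n) (i : ℝ) (s s' : NiceTree n),
        s.isSubtree T → s'.isSubtree T → v ∈ s.bag → v ∈ s'.bag →
        ∑ K ∈ (configs Q s.bag).filter (fun K => K v = some i), f K
          = ∑ K ∈ (configs Q s'.bag).filter (fun K => K v = some i), f K) ∧
      -- (i) independence of the chosen bag, for the `g`-values
      (∀ C ∈ consList Q, ∀ K₀ ∈ configs Q C.scope, ∀ s s' : NiceTree n,
        s.isSubtree T → s'.isSubtree T → C.scope ⊆ s.bag → C.scope ⊆ s'.bag →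
        ∑ K ∈ (configs Q s.bag).filter (fun K => restrictCfg K C.scope = K₀), f K
          = ∑ K ∈ (configs Q s'.bag).filter (fun K => restrictCfg K C.scope = K₀), f K) ∧
      -- (ii) and (iii)
      (∀ p : YType Q × GType Q,
        (∀ (v : Fin n) (i : {i : ℝ // i ∈ Q.dom v}) (s : NiceTree n),
          s.isSubtree T → v ∈ s.bag →
          p.1 v i = ∑ K ∈ (configs Q s.bag).filter (fun K => K v = some i.1), f K) →
        (∀ (c : Fin (consList Q).length)
          (K₀ : {K : Fin n → Option ℝ // K ∈ configs Q ((consList Q).get c).scope})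
          (s : NiceTree n), s.isSubtree T → ((consList Q).get c).scope ⊆ s.bag →
          p.2 c K₀ = ∑ K ∈ (configs Q s.bag).filter
              (fun K => restrictCfg K ((consList Q).get c).scope = K₀.1), f K) →
        BasicLP Q p ∧ ((∀ K, f K = 0 ∨ f K = 1) → IntegralYG Q p))) ∧
    -- in particular, `(y, g)` is the image of `f` under a linear map
    ∃ π : ((Fin n → Option ℝ) → ℝ) →ₗ[ℝ] (YType Q × GType Q),
      ∀ f ∈ Ppoly Q T, ∀ p : YType Q × GType Q,
        (∀ (v : Fin n) (i : {i : ℝ // i ∈ Q.dom v}) (s : NiceTree n),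
          s.isSubtree T → v ∈ s.bag →
          p.1 v i = ∑ K ∈ (configs Q s.bag).filter (fun K => K v = some i.1), f K) →
        (∀ (c : Fin (consList Q).length)
          (K₀ : {K : Fin n → Option ℝ // K ∈ configs Q ((consList Q).get c).scope})
          (s : NiceTree n), s.isSubtree T → ((consList Q).get c).scope ⊆ s.bag →
          p.2 c K₀ = ∑ K ∈ (configs Q s.bag).filter
              (fun K => restrictCfg K ((consList Q).get c).scope = K₀.1), f K) →
        π f = p := by
  choose sv hsv hvsv using hT.exists_mem_bag
  choose sc hsc hcsc using hT.exists_scope_subset_bag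
  refine ⟨fun f hf => ⟨fun v i s s' hs hs' hv hv' => ?_, fun C _ K₀ _ s s' hs hs' hU hU' => ?_,
      fun p hy hg => ⟨HasBagMarginals.basicLP hT hf ⟨hy, hg⟩,
        fun hint => HasBagMarginals.integralYG hT hf hint ⟨hy, hg⟩⟩⟩,
    bagMarginalMap Q (fun v => (sv v).bag) (fun c => (sc c).bag), fun f _ p hy hg => ?_⟩
  · exact hf.1.1.sum_filter_configs_eq
      (fun K => by rw [restrictCfg_apply_of_mem (mem_singleton_self v)]) hT.1 hs hs'
      (singleton_subset_iff.mpr hv) (singleton_subset_iff.mpr hv')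
  · exact hf.1.1.sum_filter_configs_eq
      (fun K => by rw [restrictCfg_restrictCfg Subset.rfl]) hT.1 hs hs' hU hU'
  · exact Prod.ext (funext₂ fun v i => (hy v i (sv v) (hsv v) (hvsv v)).symm)
      (funext₂ fun c K₀ => (hg c K₀ (sc c) (hsc c) (hcsc c)).symm)
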